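/- arXiv:2211.03627 — 5 statements merged into one kernel-verified Lean document; each statement's English description precedes it below -/
import Mathlib

section
/- Let U and V be real Hilbert spaces, and let B : U → V' be a continuous linear operator such that (i) γ‖u‖_U ≤ ‖Bu‖_{V'} for all u ∈ U with some constant γ > 0, and (ii) the only v ∈ V with (Bu)(v) = 0 for all u ∈ U is v = 0. Then for every l ∈ V' there exists a unique u* ∈ U such that B u* = l. -/
open scoped RealInnerProductSpace

/-- If `B : U → V'` is continuous linear, bounded below (`γ‖u‖ ≤ ‖B u‖`, `γ > 0`),
and the only `v ∈ V` with `(B u)(v) = 0` for all `u` is `v = 0`, then for every `l ∈ V'`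
there is a unique `u* ∈ U` with `B u* = l`. -/
theorem stmt_5 {U V : Type*}
    [NormedAddCommGroup U] [InnerProductSpace ℝ U] [CompleteSpace U]
    [NormedAddCommGroup V] [InnerProductSpace ℝ V] [CompleteSpace V]
    (B : U →L[ℝ] StrongDual ℝ V) (γ : ℝ) (hγ : 0 < γ)
    (hlow : ∀ u : U, γ * ‖u‖ ≤ ‖B u‖)
    (hker : ∀ v : V, (∀ u : U, B u v = 0) → v = 0)
    (l : StrongDual ℝ V) :
    ∃! ustar : U, B ustar = l := by
  classical
  set e := InnerProductSpace.toDual ℝ V with he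
  -- B' : U →L[ℝ] V, the "Riesz representative" version of B
  set B' : U →L[ℝ] V :=
    (e.symm.toContinuousLinearEquiv : StrongDual ℝ V ≃L[ℝ] V).toContinuousLinearMap.comp B
    with hB'
  have hBe : ∀ u : U, B u = e (B' u) := by
    intro u
    simp [hB']
  have hnorm : ∀ u : U, ‖B' u‖ = ‖B u‖ := by
    intro u
    rw [hBe u]
    exact (e.norm_map (B' u)).symm
  -- injectivity of B
  have hinj : Function.Injective B := by
    intro a b hab
    have h0 : B (a - b) = 0 := by rw [map_sub, hab, sub_self]
    have : γ * ‖a - b‖ ≤ 0 := by simpa [h0] using hlow (a - b)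
    have h1 : ‖a - b‖ ≤ 0 := nonpos_of_mul_nonpos_right ?_ hγ
    · have := norm_nonneg (a - b)
      have : ‖a - b‖ = 0 := le_antisymm h1 this
      have := sub_eq_zero.mp (norm_eq_zero.mp this)
      exact this
    · linarith
  -- antilipschitz
  have hanti : AntilipschitzWith (⟨γ, hγ.le⟩ : NNReal)⁻¹ B' := by
    apply ContinuousLinearMap.antilipschitz_of_bound
    intro x
    rw [hnorm]
    show ‖x‖ ≤ γ⁻¹ * ‖B x‖
    have h := hlow x
    have h2 := mul_le_mul_of_nonneg_left h (inv_nonneg.mpr hγ.le)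
    have h3 : γ⁻¹ * γ = 1 := inv_mul_cancel₀ hγ.ne'
    rw [← mul_assoc, h3, one_mul] at h2
    exact h2
  -- range of B' is closed
  have hclosed : IsClosed (Set.range B') :=
    hanti.isClosed_range B'.uniformContinuous
  -- orthogonal complement of range is trivial
  have horth : (LinearMap.range (B' : U →ₗ[ℝ] V))ᗮ = ⊥ := by
    rw [Submodule.eq_bot_iff]
    intro v hv
    apply hker
    intro u
    have h := hv (B' u) ⟨u, rfl⟩
    rw [hBe u]
    have : (e (B' u)) v = ⟪B' u, v⟫ := InnerProductSpace.toDual_apply_apply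
    rw [this]
    simpa [real_inner_comm] using h
  -- closed submodule with trivial orthogonal complement is ⊤
  have hrange_closed : (LinearMap.range (B' : U →ₗ[ℝ] V)).topologicalClosure = LinearMap.range (B' : U →ₗ[ℝ] V) := by
    apply SetLike.coe_injective
    exact hclosed.closure_eq
  have htop : LinearMap.range (B' : U →ₗ[ℝ] V) = ⊤ := by
    have := (Submodule.topologicalClosure_eq_top_iff (K := LinearMap.range (B' : U →ₗ[ℝ] V))).mpr horth
    rw [hrange_closed] at this
    exact this
  -- surjectivity of B
  have hsurjB : Function.Surjective B := by
    intro f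
    obtain ⟨u, hu⟩ := (LinearMap.range_eq_top.mp htop) (e.symm f)
    refine ⟨u, ?_⟩
    rw [hBe u, ← ContinuousLinearMap.coe_coe B', hu]
    simp
  obtain ⟨u, hu⟩ := hsurjB l
  exact ⟨u, hu, fun y hy => hinj (hy.trans hu.symm)⟩
end

section
/- Let U and V be real Hilbert spaces, B : U → V' a continuous linear operator, R_V : V → V' the Riesz map, T := R_V⁻¹ ∘ B, u* ∈ U, and l := B u*. Define the generalized Ritz functional F_T(u) := (1/2)‖T u‖_V² − l(T u). Then for every u ∈ U, F_T(u) − F_T(u*) = (1/2)‖Bu − l‖_{V'}². -/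
open scoped RealInnerProductSpace

/-- With `T := R_V⁻¹ ∘ B`, `l := B u*`, and the generalized Ritz functional
`F_T(u) := (1/2)‖T u‖² − l(T u)`, for every `u ∈ U` one has
`F_T(u) − F_T(u*) = (1/2)‖B u − l‖²`. -/
theorem stmt_7 {U V : Type*}
    [NormedAddCommGroup U] [InnerProductSpace ℝ U] [CompleteSpace U]
    [NormedAddCommGroup V] [InnerProductSpace ℝ V] [CompleteSpace V]
    (B : U →L[ℝ] StrongDual ℝ V) (ustar : U) :
    ∀ u : U,
      ((1 / 2) * ‖(InnerProductSpace.toDual ℝ V).symm (B u)‖ ^ 2 -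
          (B ustar) ((InnerProductSpace.toDual ℝ V).symm (B u))) -
        ((1 / 2) * ‖(InnerProductSpace.toDual ℝ V).symm (B ustar)‖ ^ 2 -
          (B ustar) ((InnerProductSpace.toDual ℝ V).symm (B ustar))) =
        (1 / 2) * ‖B u - B ustar‖ ^ 2 := by
  intro u
  set a := (InnerProductSpace.toDual ℝ V).symm (B u) with ha
  set b := (InnerProductSpace.toDual ℝ V).symm (B ustar) with hb
  have hB : B u - B ustar = InnerProductSpace.toDual ℝ V (a - b) := by
    rw [ha, hb, map_sub]; simp
  have hBa : (B ustar) a = ⟪b, a⟫ := by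
    rw [hb, InnerProductSpace.toDual_symm_apply]
  have hBb : (B ustar) b = ⟪b, b⟫ := by
    rw [hb, InnerProductSpace.toDual_symm_apply]
  rw [hB, hBa, hBb, (InnerProductSpace.toDual ℝ V).norm_map]
  have h := @norm_sub_sq_real V _ _ a b
  have hbb : ⟪b, b⟫ = ‖b‖ ^ 2 := real_inner_self_eq_norm_sq b
  rw [real_inner_comm] at h
  nlinarith [h]
end

section
/- Let U and V be real Hilbert spaces, B : U → V' a continuous linear operator satisfying γ‖u‖_U ≤ ‖Bu‖_{V'} for all u ∈ U with γ > 0, R_V : V → V' the Riesz map, T := R_V⁻¹ ∘ B, u* ∈ U, and l := B u*. Then u* is the unique minimizer over U of the generalized Ritz functional F_T(u) := (1/2)‖T u‖_V² − l(T u); that is, F_T(u) > F_T(u*) for every u ∈ U with u ≠ u*. -/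
open scoped RealInnerProductSpace

/-- With `γ‖u‖ ≤ ‖B u‖` (`γ > 0`), `T := R_V⁻¹ ∘ B`, `l := B u*`, the point `u*`
is the unique minimizer of the generalized Ritz functional `F_T(u) := (1/2)‖T u‖² − l(T u)`:
`F_T(u) > F_T(u*)` for every `u ≠ u*`. -/
theorem stmt_8 {U V : Type*}
    [NormedAddCommGroup U] [InnerProductSpace ℝ U] [CompleteSpace U]
    [NormedAddCommGroup V] [InnerProductSpace ℝ V] [CompleteSpace V]
    (B : U →L[ℝ] StrongDual ℝ V) (γ : ℝ) (hγ : 0 < γ)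
    (hlow : ∀ u : U, γ * ‖u‖ ≤ ‖B u‖)
    (ustar : U) :
    ∀ u : U, u ≠ ustar →
      (1 / 2) * ‖(InnerProductSpace.toDual ℝ V).symm (B ustar)‖ ^ 2 -
          (B ustar) ((InnerProductSpace.toDual ℝ V).symm (B ustar)) <
        (1 / 2) * ‖(InnerProductSpace.toDual ℝ V).symm (B u)‖ ^ 2 -
          (B ustar) ((InnerProductSpace.toDual ℝ V).symm (B u)) := by
  intro u hu
  set a := (InnerProductSpace.toDual ℝ V).symm (B u) with ha
  set b := (InnerProductSpace.toDual ℝ V).symm (B ustar) with hb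
  have hBa : (B ustar) a = ⟪b, a⟫ := by
    rw [hb, InnerProductSpace.toDual_symm_apply]
  have hBb : (B ustar) b = ⟪b, b⟫ := by
    rw [hb, InnerProductSpace.toDual_symm_apply]
  have hab : a ≠ b := by
    intro h
    apply hu
    have hB : B u = B ustar := by
      have := congrArg (InnerProductSpace.toDual ℝ V) h
      simpa [ha, hb] using this
    have h0 : B (u - ustar) = 0 := by simp [map_sub, hB]
    have := hlow (u - ustar)
    rw [h0] at this
    simp at this
    have h2 : ‖u - ustar‖ ≤ 0 := by nlinarith [norm_nonneg (u - ustar)]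
    exact norm_sub_eq_zero_iff.mp (le_antisymm h2 (norm_nonneg _))
  have hpos : 0 < ‖a - b‖ ^ 2 := by
    have : a - b ≠ 0 := sub_ne_zero.mpr hab
    exact pow_pos (norm_pos_iff.mpr this) 2
  have hexp : ‖a - b‖ ^ 2 = ‖a‖ ^ 2 - 2 * ⟪a, b⟫ + ‖b‖ ^ 2 := by
    rw [← real_inner_self_eq_norm_sq, ← real_inner_self_eq_norm_sq, ← real_inner_self_eq_norm_sq]
    rw [inner_sub_sub_self]
    rw [real_inner_comm b a]
    ring
  have hbb : ⟪b, b⟫ = ‖b‖ ^ 2 := real_inner_self_eq_norm_sq b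
  have hsym : ⟪b, a⟫ = ⟪a, b⟫ := (real_inner_comm b a).symm
  rw [hBa, hBb, hbb, hsym]
  nlinarith
end

section
/- Let U and V be real Hilbert spaces, B : U → V' a continuous linear operator satisfying γ‖u‖_U ≤ ‖Bu‖_{V'} for all u ∈ U with γ > 0, and such that the only v ∈ V with (Bu)(v) = 0 for all u ∈ U is v = 0. Let R_V : V → V' be the Riesz map, T := R_V⁻¹ ∘ B, and l ∈ V'. Then u* ∈ U satisfies B u* = l if and only if ⟪T u*, T u⟫_V = l(T u) for all u ∈ U. -/
open scoped RealInnerProductSpace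

/-- With `B` bounded below (`γ‖u‖ ≤ ‖B u‖`, `γ > 0`), trivial test kernel, and
`T := R_V⁻¹ ∘ B`, a point `u* ∈ U` satisfies `B u* = l` if and only if
`⟪T u*, T u⟫_V = l (T u)` for all `u ∈ U`. -/
theorem stmt_9 {U V : Type*}
    [NormedAddCommGroup U] [InnerProductSpace ℝ U] [CompleteSpace U]
    [NormedAddCommGroup V] [InnerProductSpace ℝ V] [CompleteSpace V]
    (B : U →L[ℝ] StrongDual ℝ V) (γ : ℝ) (hγ : 0 < γ)
    (hlow : ∀ u : U, γ * ‖u‖ ≤ ‖B u‖)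
    (hker : ∀ v : V, (∀ u : U, B u v = 0) → v = 0)
    (l : StrongDual ℝ V) (ustar : U) :
    B ustar = l ↔
      ∀ u : U, ⟪(InnerProductSpace.toDual ℝ V).symm (B ustar),
          (InnerProductSpace.toDual ℝ V).symm (B u)⟫ =
        l ((InnerProductSpace.toDual ℝ V).symm (B u)) := by
  have key : ∀ (f : StrongDual ℝ V) (y : V),
      f y = ⟪(InnerProductSpace.toDual ℝ V).symm f, y⟫ := fun f y =>
    (InnerProductSpace.toDual_symm_apply).symm
  constructor
  · intro h u
    rw [← h, ← key]
  · intro h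
    set w := (InnerProductSpace.toDual ℝ V).symm (B ustar - l) with hw
    have hw0 : w = 0 := by
      apply hker
      intro u
      rw [key (B u) w, real_inner_comm, hw, InnerProductSpace.toDual_symm_apply]
      have h2 := h u
      rw [← key] at h2
      simp only [ContinuousLinearMap.sub_apply]
      rw [key (B ustar), key l]
      rw [key (B ustar), key l] at h2
      linarith
    have h3 : B ustar - l = 0 := by
      have := congrArg (InnerProductSpace.toDual ℝ V) hw0
      simpa [hw] using this
    exact sub_eq_zero.mp h3
end

section
/- Let H and V be real Hilbert spaces, and let A' : V → H be a continuous linear equivalence such that ⟪v₁, v₂⟫_V = ⟪A' v₁, A' v₂⟫_H for all v₁, v₂ ∈ V, and let l ∈ V'. Then the functional F'(v) := (1/2)‖A' v‖_H² − l(v) has a unique minimizer v* over V, and u* := A' v* is the unique element of H satisfying the ultraweak equation ⟪u*, A' v⟫_H = l(v) for all v ∈ V. -/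
open scoped RealInnerProductSpace

/-- If `A' : V → H` is a continuous linear equivalence with
`⟪v₁, v₂⟫_V = ⟪A' v₁, A' v₂⟫_H` and `l ∈ V'`, then the adjoint Ritz functional
`F'(v) := (1/2)‖A' v‖² − l(v)` has a unique minimizer `v*` over `V`, and `u* := A' v*`
is the unique element of `H` with `⟪u*, A' v⟫_H = l(v)` for all `v ∈ V`. -/
theorem stmt_13 {H V : Type*}
    [NormedAddCommGroup H] [InnerProductSpace ℝ H] [CompleteSpace H]
    [NormedAddCommGroup V] [InnerProductSpace ℝ V] [CompleteSpace V]
    (A' : V ≃L[ℝ] H)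
    (hA' : ∀ v₁ v₂ : V, ⟪v₁, v₂⟫ = ⟪A' v₁, A' v₂⟫)
    (l : StrongDual ℝ V) :
    ∃ vstar : V,
      (∀ v : V, (1 / 2) * ‖A' vstar‖ ^ 2 - l vstar ≤ (1 / 2) * ‖A' v‖ ^ 2 - l v) ∧
      (∀ v : V, (∀ w : V, (1 / 2) * ‖A' v‖ ^ 2 - l v ≤ (1 / 2) * ‖A' w‖ ^ 2 - l w) →
        v = vstar) ∧
      (∀ v : V, ⟪A' vstar, A' v⟫ = l v) ∧
      (∀ u : H, (∀ v : V, ⟪u, A' v⟫ = l v) → u = A' vstar) := by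
  set vstar := (InnerProductSpace.toDual ℝ V).symm l with hvdef
  have hl : ∀ v : V, ⟪vstar, v⟫ = l v := fun v =>
    InnerProductSpace.toDual_symm_apply
  have hnorm : ∀ v : V, ‖A' v‖ ^ 2 = ‖v‖ ^ 2 := by
    intro v
    have h := hA' v v
    rw [real_inner_self_eq_norm_sq, real_inner_self_eq_norm_sq] at h
    linarith
  have key : ∀ v : V, (1 / 2) * ‖A' v‖ ^ 2 - l v
      = (1 / 2) * ‖v - vstar‖ ^ 2 - (1 / 2) * ‖vstar‖ ^ 2 := by
    intro v
    rw [hnorm, ← hl]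
    have expand : ‖v - vstar‖ ^ 2 = ‖v‖ ^ 2 - 2 * ⟪v, vstar⟫ + ‖vstar‖ ^ 2 :=
      norm_sub_sq_real v vstar
    have hc : ⟪v, vstar⟫ = ⟪vstar, v⟫ := (real_inner_comm v vstar).symm
    linarith
  refine ⟨vstar, ?_, ?_, ?_, ?_⟩
  · intro v
    rw [key, key]
    have h1 : (0:ℝ) ≤ ‖v - vstar‖ ^ 2 := sq_nonneg _
    have h2 : ‖vstar - vstar‖ ^ 2 = 0 := by simp
    nlinarith
  · intro v hmin
    have := hmin vstar
    rw [key, key] at this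
    have h2 : ‖vstar - vstar‖ ^ 2 = 0 := by simp
    have : ‖v - vstar‖ ^ 2 ≤ 0 := by linarith
    have : ‖v - vstar‖ = 0 := by nlinarith [norm_nonneg (v - vstar)]
    exact sub_eq_zero.mp (norm_eq_zero.mp this)
  · intro v
    rw [← hA', hl]
  · intro u hu
    have h : ∀ v : V, ⟪u - A' vstar, A' v⟫ = 0 := by
      intro v
      rw [inner_sub_left, hu v, ← hA', hl]
      ring
    have h2 := h (A'.symm (u - A' vstar))
    rw [A'.apply_symm_apply] at h2
    have := inner_self_eq_zero.mp h2
    have := sub_eq_zero.mp this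
    exact this
end
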